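/- Consider a run of the preemptive greedy algorithm with parameter β > 0 on a finite simple graph G with vertex enumeration v_1, …, v_n and a monotone, normalized, submodular function f, producing the sets S_0, …, S_n and the set U of all elements ever added. Then f(U) ≤ (1 + 1/β) · f(S_n). -/

import Mathlib

open Finset

/-- A set of vertices is independent if no two of its vertices are adjacent. -/
def IsIndep {n : ℕ} (G : SimpleGraph (Fin n)) (S : Finset (Fin n)) : Prop :=
  ∀ u ∈ S, ∀ v ∈ S, ¬ G.Adj u v

/-- `A_i`: the neighbors of `v_i` that come after `v_i` in the ordering. -/
def laterNbrs {n : ℕ} (G : SimpleGraph (Fin n)) [DecidableRel G.Adj] (i : Fin n) :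
    Finset (Fin n) :=
  Finset.univ.filter (fun j => G.Adj i j ∧ i < j)

/-- `B_i`: the neighbors of `v_i` that come before `v_i` in the ordering. -/
def earlierNbrs {n : ℕ} (G : SimpleGraph (Fin n)) [DecidableRel G.Adj] (i : Fin n) :
    Finset (Fin n) :=
  Finset.univ.filter (fun j => G.Adj i j ∧ j < i)

/-- The enumeration of `Fin n` (in its natural order) is an inductively `k`-independent
ordering of `G`. -/
def InductivelyKIndep {n : ℕ} (G : SimpleGraph (Fin n)) [DecidableRel G.Adj] (k : ℕ) : Prop :=
  ∀ i : Fin n, ∀ S ⊆ laterNbrs G i, IsIndep G S → S.card ≤ k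

/-- A set function is submodular. -/
def Submodular {V : Type*} [DecidableEq V] (f : Finset V → ℝ) : Prop :=
  ∀ A B : Finset V, f (A ∪ B) + f (A ∩ B) ≤ f A + f B

/-- The incremental value `ν_f(S, e) = f(S' ∪ {e}) - f(S')` where `S' = {s ∈ S : s < e}`. -/
def incv {V : Type*} [LinearOrder V] (f : Finset V → ℝ) (S : Finset V) (e : V) : ℝ :=
  f (insert e (S.filter (fun s => s < e))) - f (S.filter (fun s => s < e))

/-- The conflict set `C_i = N(v_i) ∩ S` of vertex `i` against the current set `S`. -/
def conflictSet {n : ℕ} (G : SimpleGraph (Fin n)) [DecidableRel G.Adj] (i : Fin n)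
    (S : Finset (Fin n)) : Finset (Fin n) :=
  S.filter (fun u => G.Adj i u)

/-- Step `i` of the preemptive greedy algorithm with parameter `β` is accepted:
`f_{S_{i-1}}(v_i) ≥ (1+β) ∑_{c ∈ C_i} ν_f(S_{i-1}, c)`, where `S_{i-1} = S i.val`. -/
def AcceptedStep {n : ℕ} (G : SimpleGraph (Fin n)) [DecidableRel G.Adj]
    (f : Finset (Fin n) → ℝ) (β : ℝ) (S : ℕ → Finset (Fin n)) (i : Fin n) : Prop :=
  (1 + β) * ∑ c ∈ conflictSet G i (S i.val), incv f (S i.val) c ≤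
    f (insert i (S i.val)) - f (S i.val)

/-- `S : ℕ → Finset (Fin n)` is a run of the preemptive greedy algorithm with parameter `β`:
`S 0 = ∅`, and at each step `i` the vertex `v_i` is accepted (replacing its conflict set) iff
its marginal value is at least `(1+β)` times the total incremental value of its conflicts. -/
def IsGreedyRun {n : ℕ} (G : SimpleGraph (Fin n)) [DecidableRel G.Adj]
    (f : Finset (Fin n) → ℝ) (β : ℝ) (S : ℕ → Finset (Fin n)) : Prop :=
  S 0 = ∅ ∧ ∀ i : Fin n,
    (AcceptedStep G f β S i →
      S (i.val + 1) = (S i.val \ conflictSet G i (S i.val)) ∪ {i}) ∧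
    (¬ AcceptedStep G f β S i → S (i.val + 1) = S i.val)

/-- `U`: the set of all elements ever (even momentarily) added to the current set. -/
def everAdded {n : ℕ} (S : ℕ → Finset (Fin n)) : Finset (Fin n) :=
  (Finset.range (n + 1)).biUnion S

/-!
Write `f U` as the sum of the incremental values of its elements. By submodularity the elements
that survive in `S_n` contribute at most `f S_n`. Every other element was evicted as a conflict of
some accepted step, and its incremental value in `U` is at most the one it had there. An accepted
step raises `f` by at least `β` times the value of the conflicts it evicts, so the evicted
elements contribute at most `f S_n / β` in total.
-/

section SetFunction

variable {V : Type*} {f : Finset V → ℝ}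

theorem Submodular.marginal_antitone [DecidableEq V] (hsub : Submodular f)
    (hmono : Monotone f) {A B : Finset V} (hAB : A ⊆ B) (c : V) :
    f (insert c B) - f B ≤ f (insert c A) - f A := by
  have h := hsub (insert c A) B
  rw [insert_union, union_eq_right.mpr hAB] at h
  have := hmono (subset_inter (subset_insert c A) hAB)
  linarith

variable [LinearOrder V]

theorem incv_nonneg (hmono : Monotone f) (S : Finset V) (c : V) : 0 ≤ incv f S c :=
  sub_nonneg.2 (hmono (subset_insert _ _))

theorem Submodular.incv_antitone (hsub : Submodular f) (hmono : Monotone f) {S T : Finset V}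
    (hST : S ⊆ T) (c : V) : incv f T c ≤ incv f S c :=
  hsub.marginal_antitone hmono (filter_subset_filter _ hST) c

theorem sum_incv (hnorm : f ∅ = 0) (T : Finset V) : ∑ c ∈ T, incv f T c = f T := by
  induction T using Finset.induction_on_max with
  | empty => simp [hnorm]
  | insert m T hlt ih =>
    have hm : m ∉ T := fun h => (hlt m h).false
    have htop : (insert m T).filter (· < m) = T := by
      rw [filter_insert, if_neg (lt_irrefl m), filter_true_of_mem hlt]
    have hbelow : ∀ c ∈ T, incv f (insert m T) c = incv f T c := fun c hc => by
      rw [incv, incv, filter_insert, if_neg (hlt c hc).not_gt]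
    rw [sum_insert hm, sum_congr rfl hbelow, ih, incv, htop]
    ring

theorem Submodular.sub_le_sum_incv_sdiff (hsub : Submodular f) (hmono : Monotone f)
    (hnorm : f ∅ = 0) {B T : Finset V} (hBT : B ⊆ T) :
    f T - f B ≤ ∑ c ∈ T \ B, incv f T c := by
  have hB : ∑ c ∈ B, incv f T c ≤ f B := by
    rw [← sum_incv hnorm B]
    exact sum_le_sum fun c _ => hsub.incv_antitone hmono hBT c
  have := sum_sdiff (f := incv f T) hBT
  rw [sum_incv hnorm] at this
  linarith

end SetFunction

theorem Finset.sum_biUnion_le_sum_sum {ι α β : Type*} [DecidableEq α] [AddCommMonoid β]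
    [PartialOrder β] [IsOrderedAddMonoid β] (s : Finset ι) (t : ι → Finset α) {g : α → β}
    (hg : ∀ x, 0 ≤ g x) : ∑ x ∈ s.biUnion t, g x ≤ ∑ i ∈ s, ∑ x ∈ t i, g x := by
  rw [← sup_eq_biUnion]
  refine s.apply_sup_le_sum (f := fun u => ∑ x ∈ u, g x) sum_empty fun {u v} => ?_
  rw [sup_eq_union, ← union_sdiff_self_eq_union, sum_union disjoint_sdiff]
  exact add_le_add_right (sum_le_sum_of_subset_of_nonneg sdiff_subset fun x _ _ => hg x) _

theorem subset_everAdded {n : ℕ} (S : ℕ → Finset (Fin n)) {j : ℕ} (hj : j ≤ n) :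
    S j ⊆ everAdded S :=
  subset_biUnion_of_mem S (mem_range.2 (Nat.lt_succ_of_le hj))

def conflictValue {n : ℕ} (G : SimpleGraph (Fin n)) [DecidableRel G.Adj]
    (f : Finset (Fin n) → ℝ) (S : ℕ → Finset (Fin n)) (i : Fin n) : ℝ :=
  ∑ c ∈ conflictSet G i (S i), incv f (S i) c

noncomputable instance AcceptedStep.decidablePred {n : ℕ} (G : SimpleGraph (Fin n))
    [DecidableRel G.Adj] (f : Finset (Fin n) → ℝ) (β : ℝ) (S : ℕ → Finset (Fin n)) :
    DecidablePred (AcceptedStep G f β S) :=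
  fun _ => Real.decidableLE _ _

namespace IsGreedyRun

variable {n : ℕ} {G : SimpleGraph (Fin n)} [DecidableRel G.Adj] {f : Finset (Fin n) → ℝ}
  {β : ℝ} {S : ℕ → Finset (Fin n)}

theorem add_mul_conflictValue_le (hrun : IsGreedyRun G f β S) (hsub : Submodular f)
    (hmono : Monotone f) (hnorm : f ∅ = 0) {i : Fin n} (hacc : AcceptedStep G f β S i) :
    f (S i) + β * conflictValue G f S i ≤ f (S (i + 1)) := by
  set C := conflictSet G i (S i)
  have hC : C ⊆ S i := filter_subset _ _
  have hnext : S (i + 1) = insert i (S i \ C) := by rw [(hrun.2 i).1 hacc, union_singleton]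
  have hgain : f (insert i (S i)) - f (S i) ≤ f (S (i + 1)) - f (S i \ C) :=
    hnext ▸ hsub.marginal_antitone hmono sdiff_subset i
  have hloss : f (S i) - f (S i \ C) ≤ conflictValue G f S i := by
    have := hsub.sub_le_sum_incv_sdiff hmono hnorm (sdiff_subset (s := S i) (t := C))
    rwa [Finset.sdiff_sdiff_eq_self hC] at this
  have hacc' : (1 + β) * conflictValue G f S i ≤ f (insert i (S i)) - f (S i) := hacc
  linarith

theorem mul_sum_conflictValue_le (hrun : IsGreedyRun G f β S) (hsub : Submodular f)
    (hmono : Monotone f) (hnorm : f ∅ = 0) :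
    β * ∑ i ∈ univ.filter (AcceptedStep G f β S), conflictValue G f S i ≤ f (S n) := by
  have hstep : ∀ i : Fin n,
      β * (if AcceptedStep G f β S i then conflictValue G f S i else 0) ≤
        f (S (i + 1)) - f (S i) := fun i => by
    split_ifs with hacc
    · linarith [hrun.add_mul_conflictValue_le hsub hmono hnorm hacc]
    · rw [(hrun.2 i).2 hacc]; simp
  calc β * ∑ i ∈ univ.filter (AcceptedStep G f β S), conflictValue G f S i
      ≤ ∑ i : Fin n, (f (S (i + 1)) - f (S i)) := by
        rw [sum_filter, mul_sum]; exact sum_le_sum fun i _ => hstep i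
    _ = f (S n) := by
        rw [Fin.sum_univ_eq_sum_range (fun j => f (S (j + 1)) - f (S j)),
          sum_range_sub (fun j => f (S j)), hrun.1, hnorm, sub_zero]

theorem mem_succ_of_mem (hrun : IsGreedyRun G f β S) (i : Fin n) {u : Fin n} (hu : u ∈ S i)
    (hkept : AcceptedStep G f β S i → u ∉ conflictSet G i (S i)) : u ∈ S (i + 1) := by
  by_cases hacc : AcceptedStep G f β S i
  · rw [(hrun.2 i).1 hacc]
    exact mem_union_left _ (mem_sdiff.2 ⟨hu, hkept hacc⟩)
  · rwa [(hrun.2 i).2 hacc]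

theorem everAdded_sdiff_subset (hrun : IsGreedyRun G f β S) :
    everAdded S \ S n ⊆
      (univ.filter (AcceptedStep G f β S)).biUnion (fun i => conflictSet G i (S i)) := by
  intro u hu
  obtain ⟨hU, hun⟩ := mem_sdiff.1 hu
  obtain ⟨j, hj, huj⟩ := mem_biUnion.1 hU
  by_contra hnever
  simp only [mem_biUnion, mem_filter, mem_univ, true_and, not_exists, not_and] at hnever
  have hstay : ∀ m, j ≤ m → m ≤ n → u ∈ S m := by
    intro m hjm
    induction m, hjm using Nat.le_induction with
    | base => exact fun _ => huj
    | succ m _ ih =>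
      exact fun hm =>
        hrun.mem_succ_of_mem ⟨m, hm⟩ (ih (Nat.le_of_succ_le hm)) (hnever ⟨m, hm⟩)
  exact hun (hstay n (Nat.lt_succ_iff.1 (mem_range.1 hj)) le_rfl)

theorem sum_incv_everAdded_sdiff_le (hrun : IsGreedyRun G f β S) (hsub : Submodular f)
    (hmono : Monotone f) :
    ∑ u ∈ everAdded S \ S n, incv f (everAdded S) u ≤
      ∑ i ∈ univ.filter (AcceptedStep G f β S), conflictValue G f S i :=
  calc ∑ u ∈ everAdded S \ S n, incv f (everAdded S) u
      ≤ ∑ u ∈ (univ.filter (AcceptedStep G f β S)).biUnion (fun i => conflictSet G i (S i)),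
          incv f (everAdded S) u :=
        sum_le_sum_of_subset_of_nonneg hrun.everAdded_sdiff_subset
          fun u _ _ => incv_nonneg hmono _ u
    _ ≤ ∑ i ∈ univ.filter (AcceptedStep G f β S),
          ∑ c ∈ conflictSet G i (S i), incv f (everAdded S) c :=
        sum_biUnion_le_sum_sum _ _ (incv_nonneg hmono _)
    _ ≤ ∑ i ∈ univ.filter (AcceptedStep G f β S), conflictValue G f S i :=
        sum_le_sum fun i _ => sum_le_sum fun c _ =>
          hsub.incv_antitone hmono (subset_everAdded S i.is_lt.le) c

end IsGreedyRun

/-- Lemma `all-taken-elements-upper-bound`: the value of the set `U` of all elements ever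
added is at most `(1 + 1/β) f(S_n)`. -/
theorem all_taken_elements_upper_bound {n : ℕ}
    (G : SimpleGraph (Fin n)) [DecidableRel G.Adj]
    (f : Finset (Fin n) → ℝ) (hsub : Submodular f)
    (hmono : ∀ A B : Finset (Fin n), A ⊆ B → f A ≤ f B) (hnorm : f ∅ = 0)
    (β : ℝ) (hβ : 0 < β)
    (S : ℕ → Finset (Fin n)) (hrun : IsGreedyRun G f β S) :
    f (everAdded S) ≤ (1 + 1 / β) * f (S n) := by
  have hmono : Monotone f := fun A B => hmono A B
  have hkept := hsub.sub_le_sum_incv_sdiff hmono hnorm (subset_everAdded S le_rfl)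
  have hremoved := hrun.sum_incv_everAdded_sdiff_le hsub hmono
  have hgain := hrun.mul_sum_conflictValue_le hsub hmono hnorm
  have hlost :
      ∑ i ∈ univ.filter (AcceptedStep G f β S), conflictValue G f S i ≤ f (S n) / β := by
    rw [le_div_iff₀ hβ]; linarith
  rw [add_mul, one_mul, one_div_mul_eq_div]
  linarith
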